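/- Let G be a nonadaptive three-query PCP game and let G' be its oracularization with a dummy question. For every commuting-operator strategy of G' there exists a commuting-operator strategy of G' with the same winning probability in which, whenever the second prover receives two identical questions (q, q), his two answers are always identical; that is, the probability of answering (a'_1, a'_2) with a'_1 ≠ a'_2 upon question pair (q, q) is zero (equivalently, the second prover's measurement operators satisfy ⟨Ψ, N_{qq}^{a'_1 a'_2} Ψ⟩-terms vanish for a'_1 ≠ a'_2, and one may take N_{qq}^{a'_1 a'_2} = 0 for a'_1 ≠ a'_2). Moreover, the new strategy can be taken with a pure shared state and projective measurements if the original one was so. -/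

import Mathlib

open scoped ComplexInnerProductSpace

attribute [local instance] Classical.propDecidable

noncomputable section

/-- The `i`-th component of a triple. -/
def tripleGet {α : Type*} (i : Fin 3) (x y z : α) : α := ![x, y, z] i

/-- Acceptance probability of one branch of the verifier of the oracularized game with a dummy
question (see `dummyWinProb`). -/
def branchScore (Qn : ℕ) {A : Type*} [Fintype A]
    (R : Fin Qn → Fin Qn → Fin Qn → A → A → A → Bool)
    (p : Fin Qn → Fin Qn → Fin Qn → Fin Qn → Fin Qn → (A × A × A) → (A × A) → ℝ)
    (q₁ q₂ q₃ p₁ p₂ : Fin Qn) (i : Fin 3) (firstReal : Bool) : ℝ :=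
  ∑ a : A × A × A, ∑ b : A × A,
    p q₁ q₂ q₃ p₁ p₂ a b *
      (if R q₁ q₂ q₃ a.1 a.2.1 a.2.2 = true ∧
          (if firstReal then b.1 else b.2) = tripleGet i a.1 a.2.1 a.2.2 then 1 else 0)

/-- The winning probability in the oracularization with a dummy question of the PCP game
`(Qn, A, R, π)`, for provers whose joint conditional answer probabilities are given by `p`. -/
def dummyWinProb (Qn : ℕ) {A : Type*} [Fintype A]
    (π : Fin Qn → Fin Qn → Fin Qn → ℝ)
    (R : Fin Qn → Fin Qn → Fin Qn → A → A → A → Bool)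
    (p : Fin Qn → Fin Qn → Fin Qn → Fin Qn → Fin Qn → (A × A × A) → (A × A) → ℝ) : ℝ :=
  ∑ q₁, ∑ q₂, ∑ q₃, ∑ t₁, ∑ t₂, ∑ t₃,
    π q₁ q₂ q₃ * π t₁ t₂ t₃ * (1 / 9) *
      ∑ i : Fin 3, ∑ j : Fin 3,
        (let q := tripleGet i q₁ q₂ q₃
         let qt := tripleGet j t₁ t₂ t₃
         if q < qt then branchScore Qn R p q₁ q₂ q₃ q qt i true
         else if qt < q then branchScore Qn R p q₁ q₂ q₃ qt q i false
         else (branchScore Qn R p q₁ q₂ q₃ q q i true +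
               branchScore Qn R p q₁ q₂ q₃ q q i false) / 2)

/-- A commuting-operator strategy of the oracularization with a dummy question of a
nonadaptive three-query PCP game with positions `[Qn]` and answer alphabet `A`: a Hilbert
space, a (pure) shared unit state, a POVM for each question `(q₁,q₂,q₃) ∈ [Qn]³` to the first
prover and a POVM for each question `(p₁,p₂) ∈ [Qn]²` to the second prover, all measurement
operators of the first prover commuting with all those of the second. -/
structure DummyCommutingStrategy (Qn : ℕ) (A : Type*) [Fintype A] where
  H : Type*
  [normedH : NormedAddCommGroup H]
  [innerH : InnerProductSpace ℂ H]
  [completeH : CompleteSpace H]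
  Psi : H
  M : Fin Qn → Fin Qn → Fin Qn → (A × A × A) → (H →L[ℂ] H)
  N : Fin Qn → Fin Qn → (A × A) → (H →L[ℂ] H)
  norm_Psi : ‖Psi‖ = 1
  M_pos : ∀ q₁ q₂ q₃ a, (M q₁ q₂ q₃ a).IsPositive
  M_sum : ∀ q₁ q₂ q₃, (∑ a, M q₁ q₂ q₃ a) = 1
  N_pos : ∀ p₁ p₂ b, (N p₁ p₂ b).IsPositive
  N_sum : ∀ p₁ p₂, (∑ b, N p₁ p₂ b) = 1
  commute : ∀ q₁ q₂ q₃ p₁ p₂ a b, M q₁ q₂ q₃ a * N p₁ p₂ b = N p₁ p₂ b * M q₁ q₂ q₃ a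

attribute [instance] DummyCommutingStrategy.normedH DummyCommutingStrategy.innerH
  DummyCommutingStrategy.completeH

/-- The winning probability of a commuting-operator strategy in the oracularization with a
dummy question: the provers answer `(a, b)` with probability `⟨Ψ, M^a N^b Ψ⟩`. -/
def DummyCommutingStrategy.winProb {Qn : ℕ} {A : Type*} [Fintype A]
    (π : Fin Qn → Fin Qn → Fin Qn → ℝ)
    (R : Fin Qn → Fin Qn → Fin Qn → A → A → A → Bool)
    (S : DummyCommutingStrategy Qn A) : ℝ :=
  dummyWinProb Qn π R
    (fun q₁ q₂ q₃ p₁ p₂ a b => (⟪S.Psi, (S.M q₁ q₂ q₃ a * S.N p₁ p₂ b) S.Psi⟫).re)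

/-- A strategy is projective when all its measurement operators are (self-adjoint)
projections. -/
def DummyCommutingStrategy.Projective {Qn : ℕ} {A : Type*} [Fintype A]
    (S : DummyCommutingStrategy Qn A) : Prop :=
  (∀ q₁ q₂ q₃ a, IsSelfAdjoint (S.M q₁ q₂ q₃ a) ∧
      S.M q₁ q₂ q₃ a * S.M q₁ q₂ q₃ a = S.M q₁ q₂ q₃ a) ∧
  (∀ p₁ p₂ b, IsSelfAdjoint (S.N p₁ p₂ b) ∧ S.N p₁ p₂ b * S.N p₁ p₂ b = S.N p₁ p₂ b)

/-!
Pass to `H ⊕ H` with the state `(Ψ, Ψ)/√2`: the summand acts as a fair coin shared by the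
provers, and the first prover measures as before on both summands. On a repeated question
`(q, q)` the second prover measures as before but reports his first answer twice on the first
summand and his second answer twice on the second. Since the verifier puts a repeated question
in either order with probability `1/2` and checks only the answer in the real position, the
averaged acceptance on repeated questions is unchanged; on distinct questions nothing changes.
-/

section Coarsening

variable {ι κ X : Type*} [Fintype ι] [DecidableEq κ]

def coarsen [AddCommMonoid X] (f : ι → κ) (P : ι → X) (k : κ) : X := ∑ i with f i = k, P i

lemma sum_coarsen [Fintype κ] [AddCommMonoid X] (f : ι → κ) (P : ι → X) :
    ∑ k, coarsen f P k = ∑ i, P i :=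
  Finset.sum_fiberwise _ f P

lemma coarsen_eq_zero [AddCommMonoid X] {f : ι → κ} {k : κ} (hk : ∀ i, f i ≠ k) (P : ι → X) :
    coarsen f P k = 0 := by
  simp [coarsen, hk]

lemma sum_coarsen_mul [Fintype κ] [NonUnitalNonAssocSemiring X] (f : ι → κ) (P : ι → X)
    (χ : κ → X) : ∑ k, coarsen f P k * χ k = ∑ i, P i * χ (f i) := by
  simp only [coarsen, Finset.sum_mul]
  rw [← Finset.sum_fiberwise _ f fun i => P i * χ (f i)]
  refine Finset.sum_congr rfl fun k _ => Finset.sum_congr rfl fun i hi => ?_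
  rw [(Finset.mem_filter.1 hi).2]

end Coarsening

section StarProjection

lemma IsStarProjection.prodMk {R S : Type*} [Mul R] [Star R] [Mul S] [Star S] {x : R} {y : S}
    (hx : IsStarProjection x) (hy : IsStarProjection y) : IsStarProjection (x, y) :=
  ⟨Prod.ext hx.isIdempotentElem hy.isIdempotentElem, Prod.ext hx.isSelfAdjoint hy.isSelfAdjoint⟩

variable {ι A : Type*} [Fintype ι] [CStarAlgebra A] [PartialOrder A] [StarOrderedRing A]
  {P : ι → A}

lemma IsStarProjection.mul_eq_zero_of_sum_eq_one (hP : ∀ i, IsStarProjection (P i))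
    (hsum : ∑ i, P i = 1) {i j : ι} (hij : i ≠ j) : P i * P j = 0 := by
  have hle : P j ≤ 1 - P i := by
    rw [← sub_nonneg, ← hsum, ← Finset.add_sum_erase _ _ (Finset.mem_univ i),
      ← Finset.add_sum_erase _ _ (Finset.mem_erase.2 ⟨hij.symm, Finset.mem_univ j⟩)]
    simpa using Finset.sum_nonneg fun k _ => (hP k).nonneg
  have h := ((hP j).le_iff_mul_eq_right (hP i).one_sub).1 hle
  rwa [sub_mul, one_mul, sub_eq_self] at h

lemma IsStarProjection.sum_of_sum_eq_one (hP : ∀ i, IsStarProjection (P i))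
    (hsum : ∑ i, P i = 1) (s : Finset ι) : IsStarProjection (∑ i ∈ s, P i) := by
  induction s using Finset.induction with
  | empty => simp
  | insert a s ha ih =>
    rw [Finset.sum_insert ha]
    refine (hP a).add ih ?_
    rw [Finset.mul_sum]
    exact Finset.sum_eq_zero fun i hi =>
      mul_eq_zero_of_sum_eq_one hP hsum (ne_of_mem_of_not_mem hi ha).symm

lemma IsStarProjection.coarsen {κ : Type*} [DecidableEq κ] (hP : ∀ i, IsStarProjection (P i))
    (hsum : ∑ i, P i = 1) (f : ι → κ) (k : κ) : IsStarProjection (coarsen f P k) :=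
  sum_of_sum_eq_one hP hsum _

end StarProjection

namespace WithLp

section RCLike

variable {𝕜 E F : Type*} [RCLike 𝕜] [NormedAddCommGroup E] [InnerProductSpace 𝕜 E]
  [NormedAddCommGroup F] [InnerProductSpace 𝕜 F]

variable (𝕜) in
def evenSuperposition (ψ : E) : WithLp 2 (E × E) :=
  toLp 2 (((√2)⁻¹ : 𝕜) • ψ, ((√2)⁻¹ : 𝕜) • ψ)

lemma norm_evenSuperposition (ψ : E) : ‖evenSuperposition 𝕜 ψ‖ = ‖ψ‖ := by
  rw [prod_norm_eq_of_L2]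
  have h : ((√2)⁻¹ * ‖ψ‖) ^ 2 + ((√2)⁻¹ * ‖ψ‖) ^ 2 = ‖ψ‖ ^ 2 := by
    rw [mul_pow, inv_pow, Real.sq_sqrt zero_le_two]; ring
  simp [evenSuperposition, norm_smul, abs_of_nonneg (Real.sqrt_nonneg 2), h]

variable [CompleteSpace E] [CompleteSpace F]

def blockDiag :
    (E →L[𝕜] E) × (F →L[𝕜] F) →⋆ₐ[𝕜] (WithLp 2 (E × F) →L[𝕜] WithLp 2 (E × F)) where
  toFun T := (prodContinuousLinearEquiv 2 𝕜 E F).symm.toContinuousLinearMap ∘L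
    T.1.prodMap T.2 ∘L (prodContinuousLinearEquiv 2 𝕜 E F).toContinuousLinearMap
  map_one' := by ext; rfl
  map_mul' _ _ := by ext; rfl
  map_zero' := by ext; rfl
  map_add' _ _ := by ext; rfl
  commutes' _ := by ext; rfl
  map_star' T := by
    rw [ContinuousLinearMap.star_eq_adjoint, ContinuousLinearMap.eq_adjoint_iff]
    intro x y
    simp [prod_inner_apply, ContinuousLinearMap.star_eq_adjoint,
      ContinuousLinearMap.adjoint_inner_left]

@[simp] lemma blockDiag_apply (T : (E →L[𝕜] E) × (F →L[𝕜] F)) (x : WithLp 2 (E × F)) :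
    blockDiag T x = toLp 2 (T.1 x.fst, T.2 x.snd) := rfl

lemma inner_evenSuperposition_blockDiag (ψ : E) (T : (E →L[𝕜] E) × (E →L[𝕜] E)) :
    inner 𝕜 (evenSuperposition 𝕜 ψ) (blockDiag T (evenSuperposition 𝕜 ψ)) =
      (inner 𝕜 ψ (T.1 ψ) + inner 𝕜 ψ (T.2 ψ)) / 2 := by
  have h : ((√2 : ℝ) : 𝕜)⁻¹ * ((√2 : ℝ) : 𝕜)⁻¹ = 2⁻¹ := by
    rw [← mul_inv, ← RCLike.ofReal_mul, Real.mul_self_sqrt zero_le_two, RCLike.ofReal_ofNat]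
  simp only [evenSuperposition, blockDiag_apply, prod_inner_apply, toLp_fst, toLp_snd, map_smul,
    inner_smul_left, inner_smul_right, map_inv₀, RCLike.conj_ofReal, ← mul_assoc, h]
  ring

end RCLike

variable {E F : Type*} [NormedAddCommGroup E] [InnerProductSpace ℂ E] [CompleteSpace E]
  [NormedAddCommGroup F] [InnerProductSpace ℂ F] [CompleteSpace F]

lemma isPositive_blockDiag {T : E →L[ℂ] E} {S : F →L[ℂ] F} (hT : T.IsPositive)
    (hS : S.IsPositive) : (blockDiag (T, S)).IsPositive := by
  rw [← ContinuousLinearMap.nonneg_iff_isPositive] at *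
  exact map_nonneg blockDiag (show (0 : (E →L[ℂ] E) × (F →L[ℂ] F)) ≤ (T, S) from ⟨hT, hS⟩)

end WithLp

lemma re_inner_mul_coarsen {ι κ H : Type*} [Fintype ι] [DecidableEq κ] [NormedAddCommGroup H]
    [InnerProductSpace ℂ H] (ψ : H) (T : H →L[ℂ] H) (f : ι → κ) (P : ι → H →L[ℂ] H) (k : κ) :
    (⟪ψ, (T * coarsen f P k) ψ⟫).re = coarsen f (fun i => (⟪ψ, (T * P i) ψ⟫).re) k := by
  simp [coarsen, Finset.mul_sum]

section Game

variable {Qn : ℕ} {A : Type*} [Fintype A]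

abbrev DummyCorrelation (Qn : ℕ) (A : Type*) :=
  Fin Qn → Fin Qn → Fin Qn → Fin Qn → Fin Qn → (A × A × A) → (A × A) → ℝ

def DummyCorrelation.mixRelabel (p : DummyCorrelation Qn A)
    (g₁ g₂ : Fin Qn → Fin Qn → A × A → A × A) : DummyCorrelation Qn A :=
  fun q₁ q₂ q₃ p₁ p₂ a b =>
    (coarsen (g₁ p₁ p₂) (p q₁ q₂ q₃ p₁ p₂ a) b + coarsen (g₂ p₁ p₂) (p q₁ q₂ q₃ p₁ p₂ a) b) / 2

def repeatFst (p₁ p₂ : Fin Qn) (c : A × A) : A × A := if p₁ = p₂ then (c.1, c.1) else c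

def repeatSnd (p₁ p₂ : Fin Qn) (c : A × A) : A × A := if p₁ = p₂ then (c.2, c.2) else c

variable (R : Fin Qn → Fin Qn → Fin Qn → A → A → A → Bool) (p : DummyCorrelation Qn A)

lemma branchScore_mixRelabel_repeat_of_ne {p₁ p₂ : Fin Qn} (h : p₁ ≠ p₂)
    (q₁ q₂ q₃ : Fin Qn) (i : Fin 3) (firstReal : Bool) :
    branchScore Qn R (p.mixRelabel repeatFst repeatSnd) q₁ q₂ q₃ p₁ p₂ i firstReal =
      branchScore Qn R p q₁ q₂ q₃ p₁ p₂ i firstReal := by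
  simp [branchScore, DummyCorrelation.mixRelabel, repeatFst, repeatSnd, h, coarsen,
    Finset.filter_eq']

lemma branchScore_mixRelabel_repeat_self (q₁ q₂ q₃ q : Fin Qn) (i : Fin 3)
    (firstReal : Bool) :
    branchScore Qn R (p.mixRelabel repeatFst repeatSnd) q₁ q₂ q₃ q q i firstReal =
      (branchScore Qn R p q₁ q₂ q₃ q q i true + branchScore Qn R p q₁ q₂ q₃ q q i false) / 2 := by
  simp only [branchScore, DummyCorrelation.mixRelabel, add_div, add_mul, Finset.sum_add_distrib,
    div_mul_eq_mul_div, ← Finset.sum_div, sum_coarsen_mul]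
  cases firstReal <;> simp [repeatFst, repeatSnd]

lemma dummyWinProb_mixRelabel_repeat (π : Fin Qn → Fin Qn → Fin Qn → ℝ) :
    dummyWinProb Qn π R (p.mixRelabel repeatFst repeatSnd) = dummyWinProb Qn π R p := by
  unfold dummyWinProb
  congr! 9 with q₁ _ q₂ _ q₃ _ t₁ _ t₂ _ t₃ _ i _ j _
  dsimp only
  split_ifs with hlt hgt
  · exact branchScore_mixRelabel_repeat_of_ne R p hlt.ne ..
  · exact branchScore_mixRelabel_repeat_of_ne R p hgt.ne ..
  · rw [branchScore_mixRelabel_repeat_self, branchScore_mixRelabel_repeat_self]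
    ring

end Game

namespace DummyCommutingStrategy

variable {Qn : ℕ} {A : Type*} [Fintype A] (S : DummyCommutingStrategy Qn A)

def correlation : DummyCorrelation Qn A :=
  fun q₁ q₂ q₃ p₁ p₂ a b => (⟪S.Psi, (S.M q₁ q₂ q₃ a * S.N p₁ p₂ b) S.Psi⟫).re

def mixRelabel (g₁ g₂ : Fin Qn → Fin Qn → A × A → A × A) : DummyCommutingStrategy Qn A where
  H := WithLp 2 (S.H × S.H)
  Psi := WithLp.evenSuperposition ℂ S.Psi
  M q₁ q₂ q₃ a := WithLp.blockDiag (S.M q₁ q₂ q₃ a, S.M q₁ q₂ q₃ a)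
  N p₁ p₂ b :=
    WithLp.blockDiag (coarsen (g₁ p₁ p₂) (S.N p₁ p₂) b, coarsen (g₂ p₁ p₂) (S.N p₁ p₂) b)
  norm_Psi := (WithLp.norm_evenSuperposition _).trans S.norm_Psi
  M_pos q₁ q₂ q₃ a := WithLp.isPositive_blockDiag (S.M_pos q₁ q₂ q₃ a) (S.M_pos q₁ q₂ q₃ a)
  M_sum q₁ q₂ q₃ := by rw [← map_sum, ← prod_mk_sum, S.M_sum, ← Prod.one_eq_mk, map_one]
  N_pos p₁ p₂ b := WithLp.isPositive_blockDiag
    (ContinuousLinearMap.isPositive_sum _ fun c _ => S.N_pos p₁ p₂ c)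
    (ContinuousLinearMap.isPositive_sum _ fun c _ => S.N_pos p₁ p₂ c)
  N_sum p₁ p₂ := by
    rw [← map_sum, ← prod_mk_sum, sum_coarsen, sum_coarsen, S.N_sum, ← Prod.one_eq_mk, map_one]
  commute q₁ q₂ q₃ p₁ p₂ a b :=
    ((Commute.prod (Commute.sum_right _ _ _ fun c _ => S.commute q₁ q₂ q₃ p₁ p₂ a c)
      (Commute.sum_right _ _ _ fun c _ => S.commute q₁ q₂ q₃ p₁ p₂ a c)).map
        WithLp.blockDiag).eq

lemma correlation_mixRelabel (g₁ g₂ : Fin Qn → Fin Qn → A × A → A × A) :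
    (S.mixRelabel g₁ g₂).correlation = S.correlation.mixRelabel g₁ g₂ := by
  ext q₁ q₂ q₃ p₁ p₂ a b
  dsimp only [correlation, mixRelabel]
  rw [← map_mul, WithLp.inner_evenSuperposition_blockDiag, Prod.mk_mul_mk]
  simp only [Complex.div_ofNat_re, Complex.add_re, re_inner_mul_coarsen]
  rfl

lemma projective_iff : S.Projective ↔ (∀ q₁ q₂ q₃ a, IsStarProjection (S.M q₁ q₂ q₃ a)) ∧
    ∀ p₁ p₂ b, IsStarProjection (S.N p₁ p₂ b) := by
  simp only [Projective, isStarProjection_iff, IsIdempotentElem, and_comm]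

lemma Projective.mixRelabel {S : DummyCommutingStrategy Qn A} (hS : S.Projective)
    (g₁ g₂ : Fin Qn → Fin Qn → A × A → A × A) : (S.mixRelabel g₁ g₂).Projective := by
  obtain ⟨hM, hN⟩ := S.projective_iff.1 hS
  refine (projective_iff _).2 ⟨fun q₁ q₂ q₃ a => ?_, fun p₁ p₂ b => ?_⟩
  · exact ((hM q₁ q₂ q₃ a).prodMk (hM q₁ q₂ q₃ a)).map WithLp.blockDiag
  · exact ((IsStarProjection.coarsen (hN p₁ p₂) (S.N_sum p₁ p₂) (g₁ p₁ p₂) b).prodMk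
      (IsStarProjection.coarsen (hN p₁ p₂) (S.N_sum p₁ p₂) (g₂ p₁ p₂) b)).map WithLp.blockDiag

lemma winProb_mixRelabel_repeat (π : Fin Qn → Fin Qn → Fin Qn → ℝ)
    (R : Fin Qn → Fin Qn → Fin Qn → A → A → A → Bool) :
    (S.mixRelabel repeatFst repeatSnd).winProb π R = S.winProb π R := by
  change dummyWinProb Qn π R (S.mixRelabel repeatFst repeatSnd).correlation =
    dummyWinProb Qn π R S.correlation
  rw [correlation_mixRelabel, dummyWinProb_mixRelabel_repeat]

lemma mixRelabel_repeat_N_self_of_ne (q : Fin Qn) {b : A × A} (hb : b.1 ≠ b.2) :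
    (S.mixRelabel repeatFst repeatSnd).N q q b = 0 := by
  have h₁ (c : A × A) : repeatFst q q c ≠ b := fun h => hb (by simp [← h, repeatFst])
  have h₂ (c : A × A) : repeatSnd q q c ≠ b := fun h => hb (by simp [← h, repeatSnd])
  change WithLp.blockDiag (coarsen _ (S.N q q) b, coarsen _ (S.N q q) b) = 0
  rw [coarsen_eq_zero h₁, coarsen_eq_zero h₂, Prod.mk_zero_zero, map_zero]

end DummyCommutingStrategy

theorem symmetrize_repeated_question.{uA, uH} {Qn : ℕ} (hQn : 0 < Qn) {A : Type uA} [Fintype A]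
    [Nonempty A]
    (π : Fin Qn → Fin Qn → Fin Qn → ℝ)
    (R : Fin Qn → Fin Qn → Fin Qn → A → A → A → Bool)
    (hπ0 : ∀ q₁ q₂ q₃, 0 ≤ π q₁ q₂ q₃)
    (hπ1 : (∑ q₁, ∑ q₂, ∑ q₃, π q₁ q₂ q₃) = 1)
    (hπsupp : ∀ q₁ q₂ q₃, π q₁ q₂ q₃ ≠ 0 → q₁ < q₂ ∧ q₂ < q₃)
    (S : DummyCommutingStrategy.{uA, uH} Qn A) :
    ∃ S' : DummyCommutingStrategy.{uA, uH} Qn A,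
      S'.winProb π R = S.winProb π R ∧
      (∀ q (b : A × A), b.1 ≠ b.2 → S'.N q q b = 0) ∧
      (S.Projective → S'.Projective) :=
  ⟨S.mixRelabel repeatFst repeatSnd, S.winProb_mixRelabel_repeat π R,
    fun q _ hb => S.mixRelabel_repeat_N_self_of_ne q hb, fun hS => hS.mixRelabel _ _⟩
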